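/- arXiv:2407.15269 — 2 statements merged into one kernel-verified Lean document; each statement's English description precedes it below -/
import Mathlib

section
/- Let U = {x ∈ ℝ⁴ : (x₁,x₂,x₃) ≠ (0,0,0)} and let f : U → ℝ be given by f(x) = √(x₁² + x₂² + x₃²). Then f is a biharmonic function on U, i.e., Δ(Δf)(x) = 0 for every x ∈ U, while Δf(x) ≠ 0 for every x ∈ U; thus f is proper biharmonic. -/
/-- The Euclidean Laplacian of a real-valued function on `ℝⁿ`:
the trace of the second (Fréchet) derivative, i.e. the sum of the
second partial derivatives in the coordinate directions. -/
noncomputable def eLaplacian {n : ℕ} (f : EuclideanSpace ℝ (Fin n) → ℝ)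
    (x : EuclideanSpace ℝ (Fin n)) : ℝ :=
  ∑ i : Fin n,
    iteratedFDeriv ℝ 2 f x ![EuclideanSpace.single i (1 : ℝ), EuclideanSpace.single i (1 : ℝ)]

noncomputable section

abbrev E4 := EuclideanSpace ℝ (Fin 4)
def gg (y : E4) : ℝ := (y 0) ^ 2 + (y 1) ^ 2 + (y 2) ^ 2
abbrev ee (i : Fin 4) : E4 := EuclideanSpace.single i 1
def Dgg (y : E4) : E4 →L[ℝ] ℝ :=
  (2 * y 0) • EuclideanSpace.proj 0 + (2 * y 1) • EuclideanSpace.proj 1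
    + (2 * y 2) • EuclideanSpace.proj 2

lemma hasFDerivAt_gg (y : E4) : HasFDerivAt gg (Dgg y) y := by
  have h : ∀ i : Fin 4, HasFDerivAt (fun z : E4 => (z i) ^ 2)
      ((2 * y i) • (EuclideanSpace.proj i : E4 →L[ℝ] ℝ)) y := by
    intro i
    have hp := (EuclideanSpace.proj i : E4 →L[ℝ] ℝ).hasFDerivAt (x := y)
    have := hp.mul hp
    simpa [pow_two, two_mul, add_smul, Pi.mul_def] using this
  exact ((h 0).add (h 1)).add (h 2)

lemma L1 (p : ℝ) {y : E4} (hy : gg y ≠ 0) :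
    HasFDerivAt (fun z => gg z ^ p) ((p * gg y ^ (p - 1)) • Dgg y) y :=
  (Real.hasDerivAt_rpow_const (Or.inl hy)).comp_hasFDerivAt y (hasFDerivAt_gg y)

lemma L2 (c p : ℝ) (j : Fin 4) {y : E4} (hy : gg y ≠ 0) :
    HasFDerivAt (fun z => c * (z j * gg z ^ p))
      (c • ((y j) • ((p * gg y ^ (p - 1)) • Dgg y)
        + (gg y ^ p) • (EuclideanSpace.proj j : E4 →L[ℝ] ℝ))) y := by
  have hp := (EuclideanSpace.proj j : E4 →L[ℝ] ℝ).hasFDerivAt (x := y)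
  exact (hp.mul (L1 p hy)).const_mul c

lemma contDiff_gg : ContDiff ℝ ⊤ gg := by
  have h : ∀ i : Fin 4, ContDiff ℝ ⊤ (fun z : E4 => (z i) ^ 2) := fun i =>
    (EuclideanSpace.proj i : E4 →L[ℝ] ℝ).contDiff.pow 2
  exact ((h 0).add (h 1)).add (h 2)

lemma contDiffAt_u (c p : ℝ) {y : E4} (hy : gg y ≠ 0) :
    ContDiffAt ℝ 2 (fun z => c * gg z ^ p) y := by
  have h1 : ContDiffAt ℝ 2 (fun t : ℝ => t ^ p) (gg y) :=
    Real.contDiffAt_rpow_const_of_ne hy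
  exact contDiffAt_const.mul (h1.comp y (contDiff_gg.of_le le_top).contDiffAt)

lemma isOpen_s : IsOpen {y : E4 | gg y ≠ 0} :=
  isOpen_ne.preimage contDiff_gg.continuous

-- first derivative in coordinate direction, as a function
lemma fderiv_u_apply (c p : ℝ) {y : E4} (hy : gg y ≠ 0) (j : Fin 4) :
    fderiv ℝ (fun z => c * gg z ^ p) y (ee j)
      = c * (p * gg y ^ (p - 1)) * Dgg y (ee j) := by
  have h := ((L1 p hy).const_mul c).fderiv
  rw [h]
  simp [mul_assoc]

lemma Dgg_apply_ne (y : E4) {j : Fin 4} (hj : j ≠ 3) : Dgg y (ee j) = 2 * y j := by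
  fin_cases j
  · simp [Dgg, ee, EuclideanSpace.single_apply]
  · simp [Dgg, ee, EuclideanSpace.single_apply]
  · simp [Dgg, ee, EuclideanSpace.single_apply]
  · simp at hj

lemma Dgg_apply_three (y : E4) : Dgg y (ee 3) = 0 := by
  simp [Dgg, ee, EuclideanSpace.single_apply]

lemma proj_ee (j : Fin 4) : (EuclideanSpace.proj j : E4 →L[ℝ] ℝ) (ee j) = 1 := by
  simp [ee, EuclideanSpace.single_apply]

lemma term_eq (c p : ℝ) {y : E4} (hy : gg y ≠ 0) (i : Fin 4) :
    iteratedFDeriv ℝ 2 (fun z => c * gg z ^ p) y ![ee i, ee i]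
      = fderiv ℝ (fun z => fderiv ℝ (fun w => c * gg w ^ p) z (ee i)) y (ee i) := by
  rw [iteratedFDeriv_two_apply]
  have hΦ : DifferentiableAt ℝ (fderiv ℝ (fun z => c * gg z ^ p)) y :=
    (((contDiffAt_u c p hy).fderiv_right (m := 1) (by norm_num)).differentiableAt one_ne_zero)
  have h := fderiv_clm_apply hΦ (differentiableAt_const (ee i))
  rw [h]
  simp [ContinuousLinearMap.flip_apply]

lemma diag (c p : ℝ) {y : E4} (hy : gg y ≠ 0) (j : Fin 4) (hj : j ≠ 3) :
    iteratedFDeriv ℝ 2 (fun z => c * gg z ^ p) y ![ee j, ee j]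
      = (2 * c * p) * (y j * (((p - 1) * gg y ^ (p - 1 - 1)) * (2 * y j)) + gg y ^ (p - 1)) := by
  rw [term_eq c p hy j]
  have hev : (fun z => fderiv ℝ (fun w => c * gg w ^ p) z (ee j))
      =ᶠ[nhds y] (fun z => (2 * c * p) * (z j * gg z ^ (p - 1))) := by
    filter_upwards [isOpen_s.mem_nhds hy] with z hz
    rw [fderiv_u_apply c p hz j, Dgg_apply_ne z hj]
    ring
  rw [hev.fderiv_eq, (L2 (2 * c * p) (p - 1) j hy).fderiv]
  have he : ee j j = 1 := by simp [ee, EuclideanSpace.single_apply]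
  simp [proj_ee, mul_assoc, Dgg_apply_ne y hj, he]
  ring

lemma diag3 (c p : ℝ) {y : E4} (hy : gg y ≠ 0) :
    iteratedFDeriv ℝ 2 (fun z => c * gg z ^ p) y ![ee 3, ee 3] = 0 := by
  rw [term_eq c p hy 3]
  have hev : (fun z => fderiv ℝ (fun w => c * gg w ^ p) z (ee 3))
      =ᶠ[nhds y] (fun _ => (0 : ℝ)) := by
    filter_upwards [isOpen_s.mem_nhds hy] with z hz
    rw [fderiv_u_apply c p hz 3, Dgg_apply_three]
    ring
  rw [hev.fderiv_eq, fderiv_fun_const]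
  simp

lemma lap_master (c p : ℝ) {y : E4} (hy : 0 < gg y) :
    eLaplacian (fun z => c * gg z ^ p) y = 2 * c * p * (2 * p + 1) * gg y ^ (p - 1) := by
  have hy' : gg y ≠ 0 := ne_of_gt hy
  have h0 := diag c p hy' 0 (by decide)
  have h1 := diag c p hy' 1 (by decide)
  have h2 := diag c p hy' 2 (by decide)
  have h3 := diag3 c p hy'
  have key : gg y * gg y ^ (p - 1 - 1) = gg y ^ (p - 1) := by
    nth_rewrite 1 [← Real.rpow_one (gg y)]
    rw [← Real.rpow_add hy]
    ring_nf
  rw [eLaplacian, Fin.sum_univ_four]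
  rw [show (EuclideanSpace.single (0:Fin 4) (1:ℝ)) = ee 0 from rfl,
      show (EuclideanSpace.single (1:Fin 4) (1:ℝ)) = ee 1 from rfl,
      show (EuclideanSpace.single (2:Fin 4) (1:ℝ)) = ee 2 from rfl,
      show (EuclideanSpace.single (3:Fin 4) (1:ℝ)) = ee 3 from rfl,
      h0, h1, h2, h3]
  have hgg : gg y = (y 0) ^ 2 + (y 1) ^ 2 + (y 2) ^ 2 := rfl
  linear_combination (4*c*p*(p-1)) * key - (4*c*p*(p-1) * gg y ^ (p - 1 - 1)) * hgg

lemma gg_nonneg (z : E4) : 0 ≤ gg z := by unfold gg; positivity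

lemma gg_pos {z : E4} (hz : gg z ≠ 0) : 0 < gg z := lt_of_le_of_ne (gg_nonneg z) (Ne.symm hz)

lemma lap_f {y : E4} (hy : 0 < gg y) :
    eLaplacian (fun z => Real.sqrt ((z 0) ^ 2 + (z 1) ^ 2 + (z 2) ^ 2)) y
      = 2 * gg y ^ (-(1/2) : ℝ) := by
  have hfeq : (fun z : E4 => Real.sqrt ((z 0) ^ 2 + (z 1) ^ 2 + (z 2) ^ 2))
      = fun z => (1 : ℝ) * gg z ^ ((1:ℝ)/2) := by
    funext z; simp [gg, Real.sqrt_eq_rpow]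
  rw [hfeq, lap_master 1 (1/2) hy]
  norm_num [show ((1:ℝ)/2 - 1 : ℝ) = -(1/2) by norm_num]


end

/-- On `U = {x ∈ ℝ⁴ : (x₁,x₂,x₃) ≠ (0,0,0)}`, the function
`f(x) = √(x₁² + x₂² + x₃²)` is proper biharmonic: `Δ(Δf) = 0` on `U` while `Δf ≠ 0` on `U`. -/
theorem dist_function_is_proper_biharmonic (x : EuclideanSpace ℝ (Fin 4))
    (hx : (x 0, x 1, x 2) ≠ ((0 : ℝ), (0 : ℝ), (0 : ℝ))) :
    eLaplacian (eLaplacian (fun y => Real.sqrt ((y 0) ^ 2 + (y 1) ^ 2 + (y 2) ^ 2))) x = 0 ∧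
      eLaplacian (fun y => Real.sqrt ((y 0) ^ 2 + (y 1) ^ 2 + (y 2) ^ 2)) x ≠ 0 := by
  have hne : x 0 ≠ 0 ∨ x 1 ≠ 0 ∨ x 2 ≠ 0 := by
    by_contra h
    push_neg at h
    exact hx (by simp [h.1, h.2.1, h.2.2])
  have hgx : 0 < gg x := by
    unfold gg
    rcases hne with h | h | h <;> positivity
  constructor
  · set φ : E4 → ℝ := fun z => 2 * gg z ^ (-(1/2) : ℝ) with hφdef
    have hfe' : fderiv ℝ (eLaplacian (fun y : E4 => Real.sqrt ((y 0) ^ 2 + (y 1) ^ 2 + (y 2) ^ 2)))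
        =ᶠ[nhds x] fderiv ℝ φ := by
      filter_upwards [isOpen_s.mem_nhds (ne_of_gt hgx)] with z hz
      have hev : eLaplacian (fun y : E4 => Real.sqrt ((y 0) ^ 2 + (y 1) ^ 2 + (y 2) ^ 2))
          =ᶠ[nhds z] φ := by
        filter_upwards [isOpen_s.mem_nhds hz] with w hw
        exact lap_f (gg_pos hw)
      exact hev.fderiv_eq
    have hsum : eLaplacian (eLaplacian (fun y : E4 => Real.sqrt ((y 0) ^ 2 + (y 1) ^ 2 + (y 2) ^ 2))) x
        = eLaplacian φ x := by
      rw [eLaplacian, eLaplacian]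
      refine Finset.sum_congr rfl fun i _ => ?_
      rw [iteratedFDeriv_two_apply, iteratedFDeriv_two_apply, hfe'.fderiv_eq]
    rw [hsum, hφdef, lap_master 2 (-(1/2)) hgx]
    norm_num
  · rw [lap_f hgx]
    have := Real.rpow_pos_of_pos hgx (-(1/2) : ℝ)
    positivity
end

section
/- Fix a constant C > 0 and let λ : ℝ × (0,∞) → ℝ be defined by λ(x,y) = ln(√C · y²) (equivalently, e^{2λ(x,y)} = C y⁴). Then λ satisfies Δλ + (1/2)·‖∇λ‖² = 0 identically on ℝ × (0,∞); in particular the biharmonicity criterion grad(Δλ) + 2·Ric(∇λ) + (1/2)·grad(‖∇λ‖²) = 0 for the warped-product projection holds, since the Euclidean plane has vanishing Ricci curvature. -/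
/-- The warping exponent `λ(x,y) = ln(√C · y²)`, so that `e^{2λ} = C y⁴`. -/
noncomputable def lamC (C : ℝ) (x : EuclideanSpace ℝ (Fin 2)) : ℝ :=
  Real.log (Real.sqrt C * (x 1) ^ 2)

open Real Filter InnerProductSpace

section Aux

local notation "E2" => EuclideanSpace ℝ (Fin 2)
local notation "proj1" => (EuclideanSpace.proj 1 : EuclideanSpace ℝ (Fin 2) →L[ℝ] ℝ)

lemma toDual_single :
    InnerProductSpace.toDual ℝ (EuclideanSpace ℝ (Fin 2)) (EuclideanSpace.single 1 (1:ℝ))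
      = proj1 := by
  ext w
  simp [InnerProductSpace.toDual_apply_apply, EuclideanSpace.inner_single_left]

lemma hasFDerivAt_comp_proj {h : ℝ → ℝ} {h' : ℝ} (x : E2)
    (hd : HasDerivAt h h' (x 1)) :
    HasFDerivAt (fun y : E2 => h (y 1)) (h' • proj1) x := by
  exact HasDerivAt.comp_hasFDerivAt (𝕜 := ℝ) x hd (proj1).hasFDerivAt

lemma hasGradientAt_comp_proj {h : ℝ → ℝ} {h' : ℝ} (x : E2)
    (hd : HasDerivAt h h' (x 1)) :
    HasGradientAt (fun y : E2 => h (y 1))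
      (h' • EuclideanSpace.single 1 (1:ℝ)) x := by
  rw [hasGradientAt_iff_hasFDerivAt, map_smul, toDual_single]
  exact hasFDerivAt_comp_proj x hd

variable {C : ℝ}

lemma hderiv_lam (hC : 0 < C) {t : ℝ} (ht : 0 < t) :
    HasDerivAt (fun t : ℝ => Real.log (Real.sqrt C * t ^ 2)) (2 * t⁻¹) t := by
  have h1 : HasDerivAt (fun t : ℝ => Real.sqrt C * t ^ 2)
      (Real.sqrt C * (↑2 * t ^ 1)) t := (hasDerivAt_pow 2 t).const_mul _
  have h2 := h1.log (by positivity)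
  convert h2 using 1
  have hsC : Real.sqrt C ≠ 0 := ne_of_gt (Real.sqrt_pos.2 hC)
  field_simp

lemma eventually_pos {x : E2} (hx : 0 < x 1) : ∀ᶠ y in nhds x, 0 < y 1 := by
  have hcont : Continuous fun y : E2 => y 1 := (proj1).continuous
  exact (isOpen_lt continuous_const hcont).mem_nhds hx

lemma fderiv_lam_eq (hC : 0 < C) {x : E2} (hx : 0 < x 1) :
    fderiv ℝ (lamC C) x = (2 * (x 1)⁻¹) • proj1 :=
  (hasFDerivAt_comp_proj x (hderiv_lam hC hx)).fderiv

lemma gradient_lam_eq (hC : 0 < C) {x : E2} (hx : 0 < x 1) :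
    gradient (lamC C) x = (2 * (x 1)⁻¹) • EuclideanSpace.single 1 (1:ℝ) :=
  (hasGradientAt_comp_proj x (hderiv_lam hC hx)).gradient

lemma second_deriv (hC : 0 < C) {x : E2} (hx : 0 < x 1) (u v : E2) :
    fderiv ℝ (fderiv ℝ (lamC C)) x u v = (2 * (-(x 1 ^ 2)⁻¹)) * u 1 * v 1 := by
  have hev : fderiv ℝ (lamC C) =ᶠ[nhds x] fun y => (2 * (y 1)⁻¹) • proj1 := by
    filter_upwards [eventually_pos hx] with y hy
    exact fderiv_lam_eq hC hy
  rw [hev.fderiv_eq]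
  have hc : HasDerivAt (fun t : ℝ => 2 * t⁻¹) (2 * (-(x 1 ^ 2)⁻¹)) (x 1) :=
    (hasDerivAt_inv (ne_of_gt hx)).const_mul 2
  have hcF : HasFDerivAt (fun y : E2 => 2 * (y 1)⁻¹)
      ((2 * (-(x 1 ^ 2)⁻¹)) • proj1) x := hasFDerivAt_comp_proj x hc
  have hF := hcF.smul (hasFDerivAt_const (proj1) x)
  rw [HasFDerivAt.fderiv (f := fun y : E2 => (2 * (y 1)⁻¹) • proj1) hF]
  simp

lemma eLap_eq (hC : 0 < C) {x : E2} (hx : 0 < x 1) :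
    eLaplacian (lamC C) x = -2 * ((x 1) ^ 2)⁻¹ := by
  rw [eLaplacian, Fin.sum_univ_two, iteratedFDeriv_two_apply, iteratedFDeriv_two_apply]
  simp only [Matrix.cons_val_zero, Matrix.cons_val_one, Matrix.head_cons]
  rw [second_deriv hC hx, second_deriv hC hx]
  simp [EuclideanSpace.single_apply]

lemma norm_grad_sq (hC : 0 < C) {x : E2} (hx : 0 < x 1) :
    ‖gradient (lamC C) x‖ ^ 2 = 4 * ((x 1) ^ 2)⁻¹ := by
  rw [gradient_lam_eq hC hx, norm_smul, EuclideanSpace.norm_single, norm_one, mul_one,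
    Real.norm_eq_abs, sq_abs, mul_pow, ← inv_pow]
  norm_num

end Aux


/-- For `C > 0`, the function `λ(x,y) = ln(√C · y²)` satisfies
`Δλ + (1/2)‖∇λ‖² = 0` on the upper half-plane `{y > 0}`; in particular (since the
Euclidean plane has vanishing Ricci curvature, so the Ricci term is `2 • 0`) the
biharmonicity criterion `grad(Δλ) + 2·Ric(∇λ) + (1/2)·grad(‖∇λ‖²) = 0` holds. -/
theorem lamC_satisfies_biharmonicity_criterion (C : ℝ) (hC : 0 < C)
    (p : EuclideanSpace ℝ (Fin 2)) (hp : 0 < p 1) :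
    (eLaplacian (lamC C) p + (1 / 2) * ‖gradient (lamC C) p‖ ^ 2 = 0) ∧
      (gradient (fun x => eLaplacian (lamC C) x) p
          + (2 : ℝ) • (0 : EuclideanSpace ℝ (Fin 2))
          + (1 / 2 : ℝ) • gradient (fun x => ‖gradient (lamC C) x‖ ^ 2) p = 0) := by
  have hpne : p 1 ≠ 0 := ne_of_gt hp
  constructor
  · rw [eLap_eq hC hp, norm_grad_sq hC hp]
    field_simp
    ring
  · have hda := ((hasDerivAt_pow 2 (p 1)).inv (pow_ne_zero 2 hpne)).const_mul (-2 : ℝ)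
    have hdb := ((hasDerivAt_pow 2 (p 1)).inv (pow_ne_zero 2 hpne)).const_mul (4 : ℝ)
    have ha : gradient (fun x => eLaplacian (lamC C) x) p
        = (-2 * (-(↑2 * p 1 ^ 1) / (p 1 ^ 2) ^ 2)) • EuclideanSpace.single 1 (1:ℝ) := by
      have hev : (fun x : EuclideanSpace ℝ (Fin 2) => eLaplacian (lamC C) x)
          =ᶠ[nhds p] fun x => -2 * ((x 1) ^ 2)⁻¹ := by
        filter_upwards [eventually_pos hp] with y hy
        exact eLap_eq hC hy
      rw [hev.gradient_eq]
      exact (hasGradientAt_comp_proj p hda).gradient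
    have hb : gradient (fun x => ‖gradient (lamC C) x‖ ^ 2) p
        = (4 * (-(↑2 * p 1 ^ 1) / (p 1 ^ 2) ^ 2)) • EuclideanSpace.single 1 (1:ℝ) := by
      have hev : (fun x : EuclideanSpace ℝ (Fin 2) => ‖gradient (lamC C) x‖ ^ 2)
          =ᶠ[nhds p] fun x => 4 * ((x 1) ^ 2)⁻¹ := by
        filter_upwards [eventually_pos hp] with y hy
        exact norm_grad_sq hC hy
      rw [hev.gradient_eq]
      exact (hasGradientAt_comp_proj p hdb).gradient
    rw [ha, hb, smul_zero, add_zero, smul_smul, ← add_smul]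
    convert zero_smul ℝ _
    push_cast
    ring
end
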